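/- arXiv:0809.0289 — 2 statements merged into one kernel-verified Lean document; each statement's English description precedes it below -/
import Mathlib

section
/- The algebra S_n is self-injective: S_n is injective as a right module over itself. -/
noncomputable section

def tF (k : Type) [Field k] : FreeAlgebra k (Fin 2) := FreeAlgebra.ι k 0

def gF (k : Type) [Field k] : FreeAlgebra k (Fin 2) := FreeAlgebra.ι k 1

inductive SRel (k : Type) [Field k] (n : ℕ) :
    FreeAlgebra k (Fin 2) → FreeAlgebra k (Fin 2) → Prop
  | tpow : SRel k n (tF k ^ n) 0
  | gsq  : SRel k n (gF k * gF k) 1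
  | anti : SRel k n (gF k * tF k + tF k * gF k) 0

/-- The algebra `S_n = k[T]/(T^n) ⋊ C₂`. -/
abbrev Sn (k : Type) [Field k] (n : ℕ) := RingQuot (SRel k n)

/-!
`S_n` is a Frobenius algebra. In the spanning set `t^i g^j` (`i < n`, `j < 2`), let `λ` read off
the coefficient of `t^(n-1)`; since `g t^m = (-1)^m t^m g`, the product of `t^i' g^j'` with
`t^(n-1-i) g^j` has `λ`-value `±1` if `(i', j') = (i, j)` and `0` otherwise, so the form
`(r, s) ↦ λ (r s)` is nondegenerate. As `S_n` is a quotient of a free algebra, `λ` is realised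
through the regular representation on `k[x]/(x^n) × k[x]/(x^n)`, where `t` acts by `x` and `g` by
`(u, v) ↦ (σ v, σ u)` with `σ x = -x`.

A finite-dimensional algebra `R` with such a functional is right self-injective by Baer's
criterion: for a right ideal `I` and `f : I → R`, extend `λ ∘ f` to a functional on `R`; by
nondegeneracy it is `λ (a * ·)` for some `a`, and then `f x = a * x` on `I`.
-/

section Frobenius

open MulOpposite

variable {k R : Type*} [Field k] [Ring R] [Algebra k R] [FiniteDimensional k R]

theorem LinearMap.exists_eq_comp_mulLeft_of_separatingLeft {lam : R →ₗ[k] k}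
    (hlam : ((LinearMap.mul k R).compr₂ lam).SeparatingLeft) (φ : R →ₗ[k] k) :
    ∃ a : R, φ = lam ∘ₗ LinearMap.mulLeft k a := by
  have hinj : Function.Injective ((LinearMap.mul k R).compr₂ lam) :=
    LinearMap.ker_eq_bot.mp (LinearMap.separatingLeft_iff_ker_eq_bot.mp hlam)
  obtain ⟨a, ha⟩ := (LinearMap.injective_iff_surjective_of_finrank_eq_finrank
    (Subspace.dual_finrank_eq (K := k) (V := R)).symm).mp hinj φ
  exact ⟨a, ha.symm⟩

theorem Module.injective_mulOpposite_of_separatingLeft (lam : R →ₗ[k] k)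
    (hlam : ((LinearMap.mul k R).compr₂ lam).SeparatingLeft) : Module.Injective Rᵐᵒᵖ R := by
  refine Module.Baer.injective fun I f => ?_
  obtain ⟨Φ, hΦ⟩ := LinearMap.exists_extend
    (p := I.restrictScalars k) (lam ∘ₗ f.restrictScalars k)
  obtain ⟨a, ha⟩ := LinearMap.exists_eq_comp_mulLeft_of_separatingLeft hlam
    (Φ ∘ₗ (opLinearEquiv k).toLinearMap)
  refine ⟨LinearMap.toSpanSingleton Rᵐᵒᵖ R a, fun x hx => ?_⟩
  refine (sub_eq_zero.mp (hlam _ fun u => ?_)).symm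
  have hxu : op u * x ∈ I := I.mul_mem_left _ hx
  have hfxu : f ⟨op u * x, hxu⟩ = f ⟨x, hx⟩ * u := f.map_smul (op u) ⟨x, hx⟩
  calc lam ((f ⟨x, hx⟩ - x • a) * u)
      = lam (f ⟨op u * x, hxu⟩) - lam (a * (unop x * u)) := by
        rw [hfxu, smul_eq_mul_unop, sub_mul, map_sub, mul_assoc]
    _ = Φ (op u * x) - Φ (op (unop x * u)) := by
        congr 1
        exacts [(LinearMap.congr_fun hΦ ⟨op u * x, hxu⟩).symm, (LinearMap.congr_fun ha _).symm]
    _ = 0 := by rw [op_mul, op_unop, sub_self]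

end Frobenius

namespace Sn

open Polynomial

variable (k : Type) [Field k] (n : ℕ)

def t : Sn k n := RingQuot.mkAlgHom k (SRel k n) (tF k)

def g : Sn k n := RingQuot.mkAlgHom k (SRel k n) (gF k)

def monomial (a j : ℕ) : Sn k n := t k n ^ a * g k n ^ j

variable {k n}

theorem t_pow_eq_zero {a : ℕ} (ha : n ≤ a) : t k n ^ a = 0 := by
  rw [← Nat.add_sub_cancel' ha, pow_add, t, ← map_pow, RingQuot.mkAlgHom_rel k SRel.tpow,
    map_zero, zero_mul]

theorem g_mul_g : g k n * g k n = 1 := by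
  rw [g, ← map_mul, RingQuot.mkAlgHom_rel k SRel.gsq, map_one]

theorem g_mul_t : g k n * t k n = (-1 : k) • (t k n * g k n) := by
  have hanti : g k n * t k n + t k n * g k n = 0 := by
    rw [g, t, ← map_mul, ← map_mul, ← map_add, RingQuot.mkAlgHom_rel k SRel.anti, map_zero]
  exact (eq_neg_of_add_eq_zero_left hanti).trans (neg_one_smul k _).symm

theorem g_mul_t_pow (a : ℕ) : g k n * t k n ^ a = (-1 : k) ^ a • (t k n ^ a * g k n) := by
  induction a with
  | zero => simp
  | succ a ih =>
    rw [pow_succ, ← mul_assoc, ih, smul_mul_assoc, mul_assoc, g_mul_t, mul_smul_comm, smul_smul,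
      ← mul_assoc, ← pow_succ, ← pow_succ]

theorem g_pow_mul_t_pow (j a : ℕ) :
    g k n ^ j * t k n ^ a = (-1 : k) ^ (j * a) • (t k n ^ a * g k n ^ j) := by
  induction j with
  | zero => simp
  | succ j ih =>
    rw [pow_succ', mul_assoc, ih, mul_smul_comm, ← mul_assoc, g_mul_t_pow, smul_mul_assoc,
      smul_smul, ← pow_add, mul_assoc, ← pow_succ', Nat.succ_mul]

theorem monomial_mul_monomial (a j c d : ℕ) :
    monomial k n a j * monomial k n c d = (-1 : k) ^ (j * c) • monomial k n (a + c) (j + d) := by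
  rw [monomial, monomial, monomial, mul_assoc, ← mul_assoc (g k n ^ j), g_pow_mul_t_pow,
    smul_mul_assoc, mul_smul_comm, mul_assoc, ← pow_add, ← mul_assoc, ← pow_add]

theorem monomial_eq_zero {a : ℕ} (ha : n ≤ a) (j : ℕ) : monomial k n a j = 0 := by
  rw [monomial, t_pow_eq_zero ha, zero_mul]

theorem monomial_mod_two (a j : ℕ) : monomial k n a (j % 2) = monomial k n a j := by
  rw [monomial, monomial, ← pow_eq_pow_mod j (pow_two (g k n) ▸ g_mul_g)]

variable (k n) in
def monomialFamily (p : Fin n × Fin 2) : Sn k n := monomial k n p.1 p.2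

theorem monomial_mem_span (a j : ℕ) :
    monomial k n a j ∈ Submodule.span k (Set.range (monomialFamily k n)) := by
  rcases lt_or_ge a n with ha | ha
  · rw [← monomial_mod_two]
    exact Submodule.subset_span ⟨(⟨a, ha⟩, ⟨j % 2, j.mod_lt two_pos⟩), rfl⟩
  · rw [monomial_eq_zero ha]
    exact Submodule.zero_mem _

theorem monomial_mul_mem_span (a j : ℕ) {w : Sn k n}
    (hw : w ∈ Submodule.span k (Set.range (monomialFamily k n))) :
    monomial k n a j * w ∈ Submodule.span k (Set.range (monomialFamily k n)) := by
  induction hw using Submodule.span_induction with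
  | mem w hw =>
    obtain ⟨p, rfl⟩ := hw
    rw [monomialFamily, monomial_mul_monomial]
    exact Submodule.smul_mem _ _ (monomial_mem_span _ _)
  | zero => rw [mul_zero]; exact Submodule.zero_mem _
  | add w w' _ _ hw hw' => rw [mul_add]; exact Submodule.add_mem _ hw hw'
  | smul c w _ hw => rw [mul_smul_comm]; exact Submodule.smul_mem _ c hw

theorem mul_mem_span (r : Sn k n) {w : Sn k n}
    (hw : w ∈ Submodule.span k (Set.range (monomialFamily k n))) :
    r * w ∈ Submodule.span k (Set.range (monomialFamily k n)) := by
  obtain ⟨r, rfl⟩ := RingQuot.mkAlgHom_surjective k (SRel k n) r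
  induction r using FreeAlgebra.induction generalizing w with
  | grade0 c =>
    rw [AlgHom.commutes, Algebra.algebraMap_eq_smul_one, smul_mul_assoc, one_mul]
    exact Submodule.smul_mem _ c hw
  | grade1 i =>
    fin_cases i
    · change t k n * w ∈ _
      simpa [monomial] using monomial_mul_mem_span 1 0 hw
    · change g k n * w ∈ _
      simpa [monomial] using monomial_mul_mem_span 0 1 hw
  | mul r r' hr hr' => rw [map_mul, mul_assoc]; exact hr (hr' hw)
  | add r r' hr hr' => rw [map_add, add_mul]; exact Submodule.add_mem _ (hr hw) (hr' hw)

theorem span_monomialFamily : Submodule.span k (Set.range (monomialFamily k n)) = ⊤ := by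
  have h1 : (1 : Sn k n) ∈ Submodule.span k (Set.range (monomialFamily k n)) := by
    simpa [monomial] using monomial_mem_span (k := k) (n := n) 0 0
  exact eq_top_iff.mpr fun r _ => mul_one r ▸ mul_mem_span r h1

instance : FiniteDimensional k (Sn k n) := by
  refine Module.finite_def.mpr ?_
  rw [← span_monomialFamily]
  exact Submodule.fg_span (Set.finite_range _)

section Representation

variable (k n)

abbrev TruncPoly := AdjoinRoot (X ^ n : k[X])

theorem root_pow_self : AdjoinRoot.root (X ^ n : k[X]) ^ n = 0 := by
  rw [← AdjoinRoot.mk_X, ← map_pow, AdjoinRoot.mk_self]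

def rootNeg : TruncPoly k n →ₐ[k] TruncPoly k n :=
  AdjoinRoot.liftAlgHom _ (Algebra.ofId k _) (-AdjoinRoot.root _) (by
    rw [eval₂_X_pow, neg_pow, root_pow_self, mul_zero])

variable {k n}

theorem rootNeg_root : rootNeg k n (AdjoinRoot.root _) = -AdjoinRoot.root _ :=
  AdjoinRoot.liftAlgHom_root ..

theorem rootNeg_rootNeg (m : TruncPoly k n) : rootNeg k n (rootNeg k n m) = m := by
  have : (rootNeg k n).comp (rootNeg k n) = AlgHom.id k _ :=
    AdjoinRoot.algHom_ext (by simp [rootNeg_root])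
  exact AlgHom.congr_fun this m

variable (k n)

def endT : Module.End k (TruncPoly k n × TruncPoly k n) :=
  Algebra.lsmul k k (TruncPoly k n × TruncPoly k n) (AdjoinRoot.root (X ^ n : k[X]))

def endG : Module.End k (TruncPoly k n × TruncPoly k n) :=
  (rootNeg k n).toLinearMap.prodMap (rootNeg k n).toLinearMap ∘ₗ
    (LinearEquiv.prodComm k _ _).toLinearMap

def rep : Sn k n →ₐ[k] Module.End k (TruncPoly k n × TruncPoly k n) :=
  RingQuot.liftAlgHom k ⟨FreeAlgebra.lift k ![endT k n, endG k n], by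
    rintro _ _ (_ | _ | _)
    · rw [tF, map_pow, FreeAlgebra.lift_ι_apply, Matrix.cons_val_zero, endT, ← map_pow,
        root_pow_self, map_zero, map_zero]
    · refine LinearMap.ext fun v => ?_
      simp [gF, endG, rootNeg_rootNeg]
    · refine LinearMap.ext fun v => ?_
      simp [gF, tF, endG, endT, rootNeg_root]⟩

variable {k n}

theorem rep_t : rep k n (t k n) = endT k n := by
  rw [rep, t, RingQuot.liftAlgHom_mkAlgHom_apply, tF, FreeAlgebra.lift_ι_apply]; rfl

theorem rep_g : rep k n (g k n) = endG k n := by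
  rw [rep, g, RingQuot.liftAlgHom_mkAlgHom_apply, gF, FreeAlgebra.lift_ι_apply]; rfl

theorem rep_monomial_fst (a j : ℕ) :
    (rep k n (monomial k n a j) (1, 0)).1 =
      if j % 2 = 0 then AdjoinRoot.root (X ^ n : k[X]) ^ a else 0 := by
  have hT (v : TruncPoly k n × TruncPoly k n) :
      (endT k n ^ a) v = AdjoinRoot.root (X ^ n : k[X]) ^ a • v := by
    rw [endT, ← map_pow]; rfl
  rw [← monomial_mod_two, monomial, map_mul, map_pow, map_pow, rep_t, rep_g]
  rcases Nat.mod_two_eq_zero_or_one j with h | h <;> simp [h, endG, hT]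

variable (k n)

def lam : Sn k n →ₗ[k] k :=
  lcoeff k (n - 1) ∘ₗ AdjoinRoot.modByMonicHom (monic_X_pow n) ∘ₗ LinearMap.fst k _ _ ∘ₗ
    LinearMap.applyₗ (1, 0) ∘ₗ (rep k n).toLinearMap

variable {k n}

theorem lam_monomial (a j : ℕ) :
    lam k n (monomial k n a j) = if a + 1 = n ∧ j % 2 = 0 then 1 else 0 := by
  rcases lt_or_ge a n with ha | ha
  · have hX : (X ^ a : k[X]) %ₘ X ^ n = X ^ a :=
      (modByMonic_eq_self_iff (monic_X_pow n)).mpr (by simpa using ha)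
    change (AdjoinRoot.modByMonicHom (monic_X_pow n)
      (rep k n (monomial k n a j) (1, 0)).1).coeff (n - 1) = _
    rw [rep_monomial_fst, apply_ite (AdjoinRoot.modByMonicHom _), ← AdjoinRoot.mk_X, ← map_pow,
      AdjoinRoot.modByMonicHom_mk, hX, map_zero]
    split_ifs <;> simp [coeff_X_pow] <;> omega
  · rw [monomial_eq_zero ha, map_zero, if_neg (by omega)]

end Representation

theorem lam_monomialFamily_mul_monomial (p : Fin n × Fin 2) (i : Fin n) (j : Fin 2) :
    lam k n (monomialFamily k n p * monomial k n (n - 1 - i) j) =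
      if p = (i, j) then (-1 : k) ^ ((p.2 : ℕ) * (n - 1 - i)) else 0 := by
  have hcond : (p.1 : ℕ) + (n - 1 - i) + 1 = n ∧ ((p.2 : ℕ) + j) % 2 = 0 ↔ p = (i, j) := by
    obtain ⟨⟨a, ha⟩, ⟨b, hb⟩⟩ := p
    obtain ⟨i, hi⟩ := i
    obtain ⟨j, hj⟩ := j
    simp only [Prod.mk.injEq, Fin.mk.injEq]
    omega
  rw [monomialFamily, monomial_mul_monomial, map_smul, lam_monomial, smul_eq_mul,
    if_congr hcond rfl rfl, mul_ite, mul_one, mul_zero]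

theorem separatingLeft_mul_lam :
    ((LinearMap.mul k (Sn k n)).compr₂ (lam k n)).SeparatingLeft := by
  intro r hr
  obtain ⟨c, rfl⟩ := (Submodule.mem_span_range_iff_exists_fun k).mp
    (span_monomialFamily (k := k) (n := n) ▸ Submodule.mem_top (x := r))
  suffices hc : c = 0 by simp [hc]
  ext ⟨i, j⟩
  simpa [Finset.sum_mul, smul_mul_assoc, lam_monomialFamily_mul_monomial] using
    hr (monomial k n (n - 1 - i) j)

end Sn

theorem stmt6_general (k : Type) [Field k] (n : ℕ) :
    Module.Injective (Sn k n)ᵐᵒᵖ (Sn k n) :=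
  Module.injective_mulOpposite_of_separatingLeft (Sn.lam k n) Sn.separatingLeft_mul_lam

/-- `S_n` is self-injective, i.e. `S_n` is injective as a right module
over itself (a right module is a module over the opposite ring). -/
theorem stmt6 (k : Type) [Field k] (hk : ringChar k ≠ 2) (n : ℕ) (hn : 1 ≤ n) :
    Module.Injective (Sn k n)ᵐᵒᵖ (Sn k n) :=
  stmt6_general k n
end
end

section
/- Let n ≥ 1 and let I_0 be a subset of [n] with the property that every i ∈ I_0 \ Φ(I_0) satisfies 2i ≥ n+1; set J_0 := Φ(I_0), and write I_0 = {i_1 > i_2 > … > i_r} and J_0 = {j_1 > j_2 > … > j_r} in decreasing order (note |I_0| = |J_0| = r). Then j_s ≤ i_s for all 1 ≤ s ≤ r; consequently every nonempty initial segment K of J_0 satisfies K ≤ I_0. -/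
/-!
Compare finite sets through their counting functions `k ↦ #{x ∈ V | k ≤ x}`: if the counts of
`V` are dominated by those of `W`, then the `s`-th largest element of `V` is at most that of `W`.
The elements of `Φ(I₀)` that are `≥ k` are the reflections `n + 1 - i` of the `i ∈ I₀` with
`i + k ≤ n + 1`. Those with `i < k` have `2i < n + 1`, so by hypothesis they lie in `Φ(I₀)`, and
their reflections are elements of `I₀` that are `≥ k` but not of the previous kind. Reflection
being injective, `Φ(I₀)` has at most as many elements `≥ k` as `I₀`, and initial segments of
`Φ(I₀)`, being subsets, inherit the bound.
-/

/-- The elements of a finite set of naturals, listed in decreasing order. -/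
def descList (V : Finset ℕ) : List ℕ := (V.sort (· ≤ ·)).reverse

/-- The order `V ≤ W` on subsets of `[n]`: writing `V = {v_1 > … > v_x}` and
`W = {w_1 > … > w_y}` in decreasing order, `V ≤ W` iff `x ≤ y` and `v_l ≤ w_l`
for all `1 ≤ l ≤ x`. -/
def SetLE (V W : Finset ℕ) : Prop :=
  V.card ≤ W.card ∧ ∀ l < V.card, (descList V).getD l 0 ≤ (descList W).getD l 0

/-- `K` is a nonempty initial segment of `I` (the `u` smallest elements of `I`
for some `u ≥ 1`): `K` is a nonempty subset of `I` which is downward closed in `I`. -/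
def IsInitSeg (K I : Finset ℕ) : Prop :=
  K.Nonempty ∧ K ⊆ I ∧ ∀ i ∈ I, ∀ j ∈ K, i ≤ j → i ∈ K

/-- `Φ(I) = {n+1-i : i ∈ I}`. -/
def Phi (n : ℕ) (I : Finset ℕ) : Finset ℕ := I.image (fun i => n + 1 - i)

open Finset

theorem List.Pairwise.le_getElem_iff_lt_countP {α : Type*} [LinearOrder α] {L : List α}
    (hL : L.Pairwise (· > ·)) (k : α) {i : ℕ} (hi : i < L.length) :
    k ≤ L[i] ↔ i < L.countP (k ≤ ·) := by
  induction L generalizing i with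
  | nil => simp at hi
  | cons a t ih =>
    obtain ⟨ha, ht⟩ := List.pairwise_cons.mp hL
    by_cases hka : k ≤ a
    · cases i with
      | zero => simp [hka]
      | succ i => simp [hka, ih ht (by simpa using hi)]
    · have hle : ∀ x ∈ a :: t, x ≤ a := fun x hx =>
        (List.mem_cons.mp hx).elim (fun h => h.le) fun h => (ha x h).le
      rw [List.countP_eq_zero.mpr fun x hx => by simpa using (hle x hx).trans_lt (not_le.mp hka)]
      simp only [Nat.not_lt_zero, iff_false, not_le]
      exact (hle _ (List.getElem_mem hi)).trans_lt (not_le.mp hka)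

lemma descList_pairwise (V : Finset ℕ) : (descList V).Pairwise (· > ·) :=
  List.pairwise_reverse.mpr V.sortedLT_sort.pairwise

lemma descList_length (V : Finset ℕ) : (descList V).length = #V := by
  simp [descList]

lemma countP_descList (V : Finset ℕ) (p : ℕ → Prop) [DecidablePred p] :
    (descList V).countP p = #{x ∈ V | p x} := by
  rw [← Multiset.coe_countP, descList, Multiset.coe_reverse, Finset.sort_eq,
    Multiset.countP_eq_card_filter]
  rfl

lemma le_descList_getD_iff {V : Finset ℕ} {s : ℕ} (hs : s < #V) (k : ℕ) :
    k ≤ (descList V).getD s 0 ↔ s < #{x ∈ V | k ≤ x} := by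
  have hlen : s < (descList V).length := by rwa [descList_length]
  rw [List.getD_eq_getElem _ _ hlen, (descList_pairwise V).le_getElem_iff_lt_countP k hlen,
    countP_descList]

lemma descList_getD_le_of_card_filter_le {V W : Finset ℕ}
    (h : ∀ k, #{x ∈ V | k ≤ x} ≤ #{x ∈ W | k ≤ x}) {s : ℕ} (hs : s < #V) :
    (descList V).getD s 0 ≤ (descList W).getD s 0 := by
  have hV := (le_descList_getD_iff hs _).mp le_rfl
  have hW : s < #W := (hV.trans_le (h _)).trans_le (card_filter_le _ _)
  exact (le_descList_getD_iff hW _).mpr (hV.trans_le (h _))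

section Phi

variable {n : ℕ} {I : Finset ℕ}

lemma injOn_reflect (hI : I ⊆ Icc 1 n) : Set.InjOn (n + 1 - ·) (I : Set ℕ) := by
  intro a ha b hb hab
  have := mem_Icc.mp (hI ha)
  have := mem_Icc.mp (hI hb)
  simp only at hab
  omega

lemma card_Phi (hI : I ⊆ Icc 1 n) : #(Phi n I) = #I :=
  card_image_of_injOn (injOn_reflect hI)

lemma reflect_mem_of_mem_Phi (hI : I ⊆ Icc 1 n) {j : ℕ} (hj : j ∈ Phi n I) :
    n + 1 - j ∈ I := by
  obtain ⟨i, hi, rfl⟩ := mem_image.mp hj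
  have := mem_Icc.mp (hI hi)
  rwa [show n + 1 - (n + 1 - i) = i by omega]

lemma card_filter_Phi (hI : I ⊆ Icc 1 n) (k : ℕ) :
    #{j ∈ Phi n I | k ≤ j} = #{i ∈ I | k ≤ n + 1 - i} := by
  rw [Phi, filter_image, card_image_of_injOn
    ((injOn_reflect hI).mono (coe_subset.mpr (filter_subset _ _)))]

lemma card_filter_Phi_le (hI : I ⊆ Icc 1 n) (hcond : ∀ i ∈ I, i ∉ Phi n I → n + 1 ≤ 2 * i)
    (k : ℕ) : #{j ∈ Phi n I | k ≤ j} ≤ #{i ∈ I | k ≤ i} := by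
  rw [card_filter_Phi hI, ← card_sdiff_le_card_sdiff_iff]
  refine card_le_card_of_injOn (n + 1 - ·) ?_
    ((injOn_reflect hI).mono (coe_subset.mpr (sdiff_subset.trans (filter_subset _ _))))
  intro i hi
  simp only [coe_sdiff, coe_filter, Set.mem_sdiff, Set.mem_ofPred_eq, not_and, not_le] at hi ⊢
  obtain ⟨⟨hiI, hki⟩, hik⟩ := hi
  replace hik := hik hiI
  have := mem_Icc.mp (hI hiI)
  have hiPhi : i ∈ Phi n I := by
    by_contra hi
    have := hcond i hiI hi
    omega
  exact ⟨⟨reflect_mem_of_mem_Phi hI hiPhi, by omega⟩, fun _ => by omega⟩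

end Phi

theorem stmt10_general (n : ℕ) (I₀ : Finset ℕ) (hI : I₀ ⊆ Finset.Icc 1 n)
    (hcond : ∀ i ∈ I₀, i ∉ Phi n I₀ → n + 1 ≤ 2 * i) :
    (Phi n I₀).card = I₀.card ∧
    (∀ s < I₀.card,
      (descList (Phi n I₀)).getD s 0 ≤ (descList I₀).getD s 0) ∧
    (∀ K : Finset ℕ, IsInitSeg K (Phi n I₀) → SetLE K I₀) := by
  have hcard := card_Phi hI
  have hcount := card_filter_Phi_le hI hcond
  refine ⟨hcard, fun s hs => descList_getD_le_of_card_filter_le hcount (hcard ▸ hs), ?_⟩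
  rintro K ⟨-, hKJ, -⟩
  have hKcount : ∀ k, #{x ∈ K | k ≤ x} ≤ #{x ∈ I₀ | k ≤ x} := fun k =>
    (card_le_card (filter_subset_filter _ hKJ)).trans (hcount k)
  exact ⟨hcard ▸ card_le_card hKJ, fun l hl => descList_getD_le_of_card_filter_le hKcount hl⟩

/-- if `I₀ ⊆ [n]` satisfies that every `i ∈ I₀ \ Φ(I₀)` has
`2i ≥ n+1` and `J₀ = Φ(I₀)` (so `|I₀| = |J₀| = r`), then writing
`I₀ = {i_1 > … > i_r}` and `J₀ = {j_1 > … > j_r}` we have `j_s ≤ i_s` for all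
`1 ≤ s ≤ r`; consequently every nonempty initial segment `K` of `J₀` satisfies
`K ≤ I₀`. -/
theorem stmt10 (n : ℕ) (hn : 1 ≤ n) (I₀ : Finset ℕ) (hI : I₀ ⊆ Finset.Icc 1 n)
    (hcond : ∀ i ∈ I₀, i ∉ Phi n I₀ → n + 1 ≤ 2 * i) :
    (Phi n I₀).card = I₀.card ∧
    (∀ s < I₀.card,
      (descList (Phi n I₀)).getD s 0 ≤ (descList I₀).getD s 0) ∧
    (∀ K : Finset ℕ, IsInitSeg K (Phi n I₀) → SetLE K I₀) :=
  stmt10_general n I₀ hI hcond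
end
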